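/- If a locally kω Hausdorff space X is metrizable, then X is locally compact. -/

import Mathlib

/-- `K` is a kω-sequence for the topological space `X`: an ascending sequence of
compact subsets covering `X` such that the topology of `X` is final with respect
to the inclusions `K n → X`. -/
def IsKOmegaSeq {X : Type*} [TopologicalSpace X] (K : ℕ → Set X) : Prop :=
  (∀ n, IsCompact (K n)) ∧ Monotone K ∧ (⋃ n, K n) = Set.univ ∧
    ∀ U : Set X, IsOpen U ↔ ∀ n, IsOpen ((Subtype.val ⁻¹' U) : Set (K n))

/-- A kω-space: a Hausdorff space which is the direct limit of an ascending
sequence of compact subsets. -/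
def IsKOmega (X : Type*) [TopologicalSpace X] : Prop :=
  T2Space X ∧ ∃ K : ℕ → Set X, IsKOmegaSeq K

/-- A locally kω space: a Hausdorff space each point of which has an open
neighbourhood which is a kω-space in the induced topology. -/
def IsLocallyKOmega (X : Type*) [TopologicalSpace X] : Prop :=
  T2Space X ∧ ∀ x : X, ∃ U : Set X, IsOpen U ∧ x ∈ U ∧ IsKOmega U

/-!
If `y` had no compact neighbourhood in a first-countable kω-space with kω-sequence `K`, pick
`x m` in the `m`-th basic neighbourhood of `y` outside `K m ∪ {y}`. The set of the `x m` meets each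
`K n` in finitely many points, so it is closed, yet `x m → y` and `y` is not among them.
Metrizable spaces are first countable, so every point of a metrizable locally kω space has an
open kω neighbourhood which is locally compact.
-/

open Filter Topology

namespace IsKOmegaSeq

variable {Y : Type*} [TopologicalSpace Y] {K : ℕ → Set Y}

theorem isClosed_of_forall_finite_inter [T1Space Y] (hK : IsKOmegaSeq K) {A : Set Y}
    (hA : ∀ n, (A ∩ K n).Finite) : IsClosed A := by
  rw [← isOpen_compl_iff, hK.2.2.2]
  intro n
  have hfin : (Subtype.val ⁻¹' A : Set (K n)).Finite :=
    ((hA n).preimage Subtype.val_injective.injOn).subset fun a ha => ⟨ha, a.2⟩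
  rw [Set.preimage_compl]
  exact hfin.isClosed.isOpen_compl

theorem weaklyLocallyCompactSpace [T1Space Y] [FirstCountableTopology Y] (hK : IsKOmegaSeq K) :
    WeaklyLocallyCompactSpace Y where
  exists_compact_mem_nhds y := by
    obtain ⟨V, hV⟩ := (𝓝 y).exists_antitone_basis
    by_contra! hnone
    have hV_not_sub : ∀ m, ¬ V m ⊆ K m ∪ {y} := fun m hm =>
      hnone _ ((hK.1 m).union isCompact_singleton) (mem_of_superset (hV.mem m) hm)
    choose x hxV hxK using fun m => Set.not_subset.mp (hV_not_sub m)
    have hA : IsClosed (Set.range x) := by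
      refine hK.isClosed_of_forall_finite_inter fun n => ((Set.finite_Iio n).image x).subset ?_
      rintro _ ⟨⟨m, rfl⟩, hmK⟩
      exact ⟨m, not_le.mp fun hnm => hxK m (Or.inl (hK.2.1 hnm hmK)), rfl⟩
    obtain ⟨m, hm⟩ := hA.mem_of_tendsto (hV.tendsto hxV) (Eventually.of_forall Set.mem_range_self)
    exact hxK m (Or.inr hm)

end IsKOmegaSeq

/-- A metrizable locally kω space is locally compact. -/
theorem locallyCompact_of_metrizable_locallyKOmega
    (X : Type*) [TopologicalSpace X] [TopologicalSpace.MetrizableSpace X]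
    (hX : IsLocallyKOmega X) : LocallyCompactSpace X := by
  suffices WeaklyLocallyCompactSpace X from inferInstance
  refine ⟨fun x => ?_⟩
  obtain ⟨U, hUo, hxU, -, K, hK⟩ := hX.2 x
  have := hK.weaklyLocallyCompactSpace
  obtain ⟨s, hsc, hsn⟩ := exists_compact_mem_nhds (⟨x, hxU⟩ : U)
  refine ⟨Subtype.val '' s, hsc.image continuous_subtype_val, ?_⟩
  rw [← hUo.isOpenEmbedding_subtypeVal.map_nhds_eq ⟨x, hxU⟩]
  exact image_mem_map hsn
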